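/- Fix j ≥ 2 and positive parameters. For every fixed I_1 ≥ 0 there exist unique real numbers S, S̃, R, I_2, …, I_j, Ĩ satisfying all of the equilibrium equations except the I_1-balance equation f·c_v·Ĩ·S/S̄ = (α_1+μ_1)·I_1; explicitly, I_k = c_{k−1}⋯c_1·I_1 for 2 ≤ k ≤ j, R = c_j·c_{j−1}⋯c_1·I_1 with c_j = γ/μ_r, S̃ = μ̃_s·S̄_v/(μ̃_s + (f·c·I_1/S̄)·ξ), Ĩ = S̄_v − S̃, and S = μ_s·S̄/(μ_s + f·c_v·Ĩ/S̄). -/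

import Mathlib

open Finset

/-- The coefficients `c_0 = 1`, `c_k = α_k/(α_{k+1}+μ_{k+1})` for `1 ≤ k ≤ j−2`, and
`c_{j−1} = α_{j−1}/(γ+μ_j)` of the relapsing host–vector model. -/
noncomputable def ccoef (j : ℕ) (γ : ℝ) (α μ : ℕ → ℝ) : ℕ → ℝ := fun k =>
  if k = 0 then 1
  else if k = j - 1 then α (j - 1) / (γ + μ j)
  else α k / (α (k + 1) + μ (k + 1))

/-- `ξ = Σ_{k=1}^{j} c_0·c_1⋯c_{k−1}`. -/
noncomputable def xiSum (j : ℕ) (γ : ℝ) (α μ : ℕ → ℝ) : ℝ :=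
  ∑ k ∈ Icc 1 j, ∏ l ∈ range k, ccoef j γ α μ l

/-- All of the equilibrium equations of the single host–vector relapsing disease model
with `j` infected compartments (constant populations `N = S̄`, `Ñ = S̄_v`) *except*
the `I_1`-balance equation `f·c_v·Ĩ·S/S̄ = (α_1+μ_1)·I_1`. -/
def IsEquilibNoI1 (j : ℕ) (f c cv γ Sb Sbv μs μr μts μt : ℝ) (α μ : ℕ → ℝ)
    (S R St It : ℝ) (I : ℕ → ℝ) : Prop :=
  μs * (Sb - S) = f * cv * It * S / Sb ∧
  (∀ k, 2 ≤ k → k ≤ j - 1 → α (k - 1) * I (k - 1) = (α k + μ k) * I k) ∧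
  α (j - 1) * I (j - 1) = (γ + μ j) * I j ∧
  γ * I j = μr * R ∧
  μts * (Sbv - St) = f * c * St / Sb * ∑ k ∈ Icc 1 j, I k ∧
  f * c * St / Sb * ∑ k ∈ Icc 1 j, I k = μt * It ∧
  It = Sbv - St

/-
The equations other than the `I_1`-balance form a triangular system. The chain
`α_{k-1} I_{k-1} = (outflow of compartment k) · I_k` gives `I_k = c_{k-1} I_{k-1}`, hence
`I_k = c_{k-1} ⋯ c_1 I_1`, `ΣI_k = ξ I_1` and `R = (γ/μ_r) I_j`. Each susceptible class then obeys a
balance `m (N - x) = λ x` with a nonnegative force of infection `λ`, whose only solution is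
`x = m N / (m + λ)`; because `μ̃ = μ̃_s`, the `Ĩ`-equation is implied by the `S̃`-equation and
`Ĩ = S̄_v - S̃`.
-/

lemma mul_eq_mul_iff_eq_div_mul {a d x y : ℝ} (hd : d ≠ 0) : a * x = d * y ↔ y = a / d * x := by
  rw [div_mul_eq_mul_div, eq_div_iff hd]
  constructor <;> intro h <;> linear_combination -h

lemma mul_sub_eq_mul_iff {m N l x : ℝ} (h : m + l ≠ 0) :
    m * (N - x) = l * x ↔ x = m * N / (m + l) := by
  rw [eq_div_iff h]
  constructor <;> intro h <;> linear_combination -h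

lemma mul_div_add_le {m l N : ℝ} (hm : 0 < m) (hl : 0 ≤ l) (hN : 0 ≤ N) :
    m * N / (m + l) ≤ N := by
  rw [div_le_iff₀ (by positivity)]
  nlinarith

lemma recurrence_iff_eq_prod {M : Type*} [CommMonoid M] (c x : ℕ → M) (n : ℕ) :
    (∀ k, 2 ≤ k → k ≤ n → x k = c (k - 1) * x (k - 1)) ↔
      ∀ k, 1 ≤ k → k ≤ n → x k = (∏ l ∈ Icc 1 (k - 1), c l) * x 1 := by
  constructor
  · intro hrec k hk
    induction k, hk using Nat.le_induction with
    | base => simp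
    | succ k hk ih =>
      intro hkn
      obtain ⟨m, rfl⟩ : ∃ m, k = m + 1 := ⟨k - 1, by omega⟩
      rw [hrec (m + 1 + 1) (by omega) hkn, Nat.add_sub_cancel, ih (by omega), Nat.add_sub_cancel,
        prod_Icc_succ_top (by omega), mul_comm _ (c _), mul_assoc]
  · intro hprod k hk hkn
    obtain ⟨m, rfl⟩ : ∃ m, k = m + 1 + 1 := ⟨k - 2, by omega⟩
    rw [hprod (m + 1 + 1) (by omega) hkn, Nat.add_sub_cancel, hprod (m + 1) (by omega) (by omega),
      Nat.add_sub_cancel, prod_Icc_succ_top (by omega), mul_comm _ (c _), mul_assoc]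

section Coefficients

variable {j : ℕ} {γ : ℝ} {α μ : ℕ → ℝ}

lemma ccoef_zero : ccoef j γ α μ 0 = 1 := if_pos rfl

lemma ccoef_sub_one_of_lt {k : ℕ} (hk : 2 ≤ k) (hkj : k < j) :
    ccoef j γ α μ (k - 1) = α (k - 1) / (α k + μ k) := by
  rw [ccoef, if_neg (by omega), if_neg (by omega), Nat.sub_add_cancel (by omega)]

lemma ccoef_sub_one_self (hj : 2 ≤ j) : ccoef j γ α μ (j - 1) = α (j - 1) / (γ + μ j) := by
  rw [ccoef, if_neg (by omega), if_pos rfl]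

lemma ccoef_pos (hγ : 0 < γ) (hα : ∀ k, 1 ≤ k → k ≤ j - 1 → 0 < α k)
    (hμ : ∀ k, 1 ≤ k → k ≤ j → 0 < μ k) {l : ℕ} (hl : l ≤ j - 1) : 0 < ccoef j γ α μ l := by
  unfold ccoef
  split_ifs with h0 hj
  · exact one_pos
  · have := hμ j (by omega) le_rfl
    exact div_pos (hα _ (by omega) (by omega)) (by positivity)
  · have := hα (l + 1) (by omega) (by omega)
    have := hμ (l + 1) (by omega) (by omega)
    exact div_pos (hα _ (by omega) (by omega)) (by positivity)

lemma xiSum_nonneg (hγ : 0 < γ) (hα : ∀ k, 1 ≤ k → k ≤ j - 1 → 0 < α k)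
    (hμ : ∀ k, 1 ≤ k → k ≤ j → 0 < μ k) : 0 ≤ xiSum j γ α μ :=
  sum_nonneg fun k hk => (prod_pos fun l hl =>
    ccoef_pos hγ hα hμ (by simp only [mem_Icc, mem_range] at hk hl; omega)).le

lemma prod_range_ccoef {k : ℕ} (hk : 1 ≤ k) :
    ∏ l ∈ range k, ccoef j γ α μ l = ∏ l ∈ Icc 1 (k - 1), ccoef j γ α μ l := by
  obtain ⟨m, rfl⟩ : ∃ m, k = m + 1 := ⟨k - 1, by omega⟩
  rw [prod_range_eq_mul_Ico _ (by omega), ccoef_zero, one_mul, Ico_add_one_right_eq_Icc,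
    Nat.add_sub_cancel]

lemma sum_Icc_eq_xiSum_mul {I : ℕ → ℝ}
    (hI : ∀ k, 1 ≤ k → k ≤ j → I k = (∏ l ∈ Icc 1 (k - 1), ccoef j γ α μ l) * I 1) :
    ∑ k ∈ Icc 1 j, I k = xiSum j γ α μ * I 1 := by
  rw [xiSum, sum_mul]
  refine sum_congr rfl fun k hk => ?_
  rw [mem_Icc] at hk
  rw [hI k hk.1 hk.2, prod_range_ccoef hk.1]

lemma infected_chain_iff (hj : 2 ≤ j) (hγ : 0 < γ) (hα : ∀ k, 1 ≤ k → k ≤ j - 1 → 0 < α k)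
    (hμ : ∀ k, 1 ≤ k → k ≤ j → 0 < μ k) (I : ℕ → ℝ) :
    ((∀ k, 2 ≤ k → k ≤ j - 1 → α (k - 1) * I (k - 1) = (α k + μ k) * I k) ∧
        α (j - 1) * I (j - 1) = (γ + μ j) * I j) ↔
      ∀ k, 2 ≤ k → k ≤ j → I k = ccoef j γ α μ (k - 1) * I (k - 1) := by
  have hmid {k : ℕ} (hk : 2 ≤ k) (hkj : k < j) :
      α (k - 1) * I (k - 1) = (α k + μ k) * I k ↔ I k = ccoef j γ α μ (k - 1) * I (k - 1) := by
    have := hα k (by omega) (by omega)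
    have := hμ k (by omega) (by omega)
    rw [ccoef_sub_one_of_lt hk hkj]
    exact mul_eq_mul_iff_eq_div_mul (by positivity)
  have hlast : α (j - 1) * I (j - 1) = (γ + μ j) * I j ↔
      I j = ccoef j γ α μ (j - 1) * I (j - 1) := by
    have := hμ j (by omega) le_rfl
    rw [ccoef_sub_one_self hj]
    exact mul_eq_mul_iff_eq_div_mul (by positivity)
  constructor
  · rintro ⟨hmids, hj'⟩ k hk hkj
    rcases hkj.lt_or_eq with hlt | rfl
    · exact (hmid hk hlt).1 (hmids k hk (by omega))
    · exact hlast.1 hj'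
  · intro h
    exact ⟨fun k hk hkj => (hmid hk (by omega)).2 (h k hk (by omega)), hlast.2 (h j hj le_rfl)⟩

end Coefficients

theorem isEquilibNoI1_iff {j : ℕ} {f c cv γ Sb Sbv μs μr μts μt : ℝ} {α μ : ℕ → ℝ}
    (hj : 2 ≤ j) (hf : 0 < f) (hc : 0 < c) (hcv : 0 < cv) (hγ : 0 < γ) (hSb : 0 < Sb)
    (hSbv : 0 < Sbv) (hμs : 0 < μs) (hμr : 0 < μr) (hμts : 0 < μts)
    (hα : ∀ k, 1 ≤ k → k ≤ j - 1 → 0 < α k) (hμ : ∀ k, 1 ≤ k → k ≤ j → 0 < μ k)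
    (hμeq : μt = μts) (S R St It : ℝ) (I : ℕ → ℝ) (hI1 : 0 ≤ I 1) :
    IsEquilibNoI1 j f c cv γ Sb Sbv μs μr μts μt α μ S R St It I ↔
      (∀ k, 1 ≤ k → k ≤ j → I k = (∏ l ∈ Icc 1 (k - 1), ccoef j γ α μ l) * I 1) ∧
      R = γ / μr * (∏ l ∈ Icc 1 (j - 1), ccoef j γ α μ l) * I 1 ∧
      St = μts * Sbv / (μts + f * c * I 1 / Sb * xiSum j γ α μ) ∧
      It = Sbv - St ∧
      S = μs * Sb / (μs + f * cv * It / Sb) := by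
  have hξ := xiSum_nonneg hγ hα hμ
  have hvec : 0 < μts + f * c * I 1 / Sb * xiSum j γ α μ := by positivity
  have hhost (hSt : St = μts * Sbv / (μts + f * c * I 1 / Sb * xiSum j γ α μ)) :
      0 < μs + f * cv * (Sbv - St) / Sb := by
    have hSt_le : St ≤ Sbv := hSt ▸ mul_div_add_le hμts (by positivity) hSbv.le
    exact add_pos_of_pos_of_nonneg hμs
      (div_nonneg (mul_nonneg (by positivity) (sub_nonneg.2 hSt_le)) hSb.le)
  have hR (hI : I j = (∏ l ∈ Icc 1 (j - 1), ccoef j γ α μ l) * I 1) :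
      γ * I j = μr * R ↔ R = γ / μr * (∏ l ∈ Icc 1 (j - 1), ccoef j γ α μ l) * I 1 := by
    rw [mul_eq_mul_iff_eq_div_mul hμr.ne', hI, mul_assoc]
  rw [IsEquilibNoI1]
  constructor
  · rintro ⟨hS, hmid, hlast, hγR, hSt, -, rfl⟩
    have hI := (recurrence_iff_eq_prod _ _ _).1 ((infected_chain_iff hj hγ hα hμ I).1 ⟨hmid, hlast⟩)
    rw [sum_Icc_eq_xiSum_mul hI] at hSt
    have hSt' : St = μts * Sbv / (μts + f * c * I 1 / Sb * xiSum j γ α μ) :=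
      (mul_sub_eq_mul_iff hvec.ne').1 (by linear_combination hSt)
    exact ⟨hI, (hR (hI j (by omega) le_rfl)).1 hγR, hSt', rfl,
      (mul_sub_eq_mul_iff (hhost hSt').ne').1 (by linear_combination hS)⟩
  · rintro ⟨hI, hγR, hSt, rfl, hS⟩
    obtain ⟨hmid, hlast⟩ :=
      (infected_chain_iff hj hγ hα hμ I).2 ((recurrence_iff_eq_prod _ _ _).2 hI)
    have hvec_balance := (mul_sub_eq_mul_iff hvec.ne').2 hSt
    have hhost_balance := (mul_sub_eq_mul_iff (hhost hSt).ne').2 hS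
    rw [sum_Icc_eq_xiSum_mul hI, hμeq]
    exact ⟨by linear_combination hhost_balance, hmid, hlast, (hR (hI j (by omega) le_rfl)).2 hγR,
      by linear_combination hvec_balance, by linear_combination -hvec_balance, rfl⟩

theorem stmt2_general (j : ℕ) (hj : 2 ≤ j)
    (f c cv γ Sb Sbv μs μr μts μt : ℝ) (α μ : ℕ → ℝ)
    (hf : 0 < f) (hc : 0 < c) (hcv : 0 < cv) (hγ : 0 < γ)
    (hSb : 0 < Sb) (hSbv : 0 < Sbv) (hμs : 0 < μs) (hμr : 0 < μr)
    (hμts : 0 < μts)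
    (hα : ∀ k, 1 ≤ k → k ≤ j - 1 → 0 < α k)
    (hμ : ∀ k, 1 ≤ k → k ≤ j → 0 < μ k)
    (hμeq : μt = μts)
    (I1 : ℝ) (hI1 : 0 ≤ I1) :
    (∃ S R St It : ℝ, ∃ I : ℕ → ℝ, I 1 = I1 ∧
        IsEquilibNoI1 j f c cv γ Sb Sbv μs μr μts μt α μ S R St It I) ∧
    (∀ S R St It : ℝ, ∀ I : ℕ → ℝ, I 1 = I1 →
        IsEquilibNoI1 j f c cv γ Sb Sbv μs μr μts μt α μ S R St It I →
        St = μts * Sbv / (μts + f * c * I1 / Sb * xiSum j γ α μ) ∧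
        It = Sbv - μts * Sbv / (μts + f * c * I1 / Sb * xiSum j γ α μ) ∧
        S = μs * Sb /
          (μs + f * cv * (Sbv - μts * Sbv / (μts + f * c * I1 / Sb * xiSum j γ α μ)) / Sb) ∧
        R = γ / μr * (∏ l ∈ Icc 1 (j - 1), ccoef j γ α μ l) * I1 ∧
        ∀ k, 2 ≤ k → k ≤ j → I k = (∏ l ∈ Icc 1 (k - 1), ccoef j γ α μ l) * I1) := by
  have hiff := isEquilibNoI1_iff hj hf hc hcv hγ hSb hSbv hμs hμr hμts hα hμ hμeq
  refine ⟨?_, fun S R St It I hI h => ?_⟩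
  · let I : ℕ → ℝ := fun k => (∏ l ∈ Icc 1 (k - 1), ccoef j γ α μ l) * I1
    have hI : I 1 = I1 := by simp [I]
    exact ⟨_, _, _, _, I, hI,
      (hiff _ _ _ _ I (hI ▸ hI1)).2 ⟨fun k _ _ => by rw [hI], rfl, rfl, rfl, rfl⟩⟩
  · subst hI
    obtain ⟨hI, rfl, rfl, rfl, rfl⟩ := (hiff S R St It I hI1).1 h
    exact ⟨rfl, rfl, rfl, rfl, fun k hk hkj => hI k (by omega) hkj⟩

/-- For every fixed `I_1 ≥ 0` there exist unique
`S, S̃, R, I_2, …, I_j, Ĩ` satisfying all the equilibrium equations except the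
`I_1`-balance equation; explicitly `I_k = c_{k−1}⋯c_1·I_1`, `R = (γ/μ_r)·c_{j−1}⋯c_1·I_1`,
`S̃ = μ̃_s·S̄_v/(μ̃_s + (f·c·I_1/S̄)·ξ)`, `Ĩ = S̄_v − S̃`, and
`S = μ_s·S̄/(μ_s + f·c_v·Ĩ/S̄)`. -/
theorem stmt2 (j : ℕ) (hj : 2 ≤ j)
    (f c cv γ Sb Sbv μs μr μts μt : ℝ) (α μ : ℕ → ℝ)
    (hf : 0 < f) (hc : 0 < c) (hcv : 0 < cv) (hγ : 0 < γ)
    (hSb : 0 < Sb) (hSbv : 0 < Sbv) (hμs : 0 < μs) (hμr : 0 < μr)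
    (hμts : 0 < μts) (hμt : 0 < μt)
    (hα : ∀ k, 1 ≤ k → k ≤ j - 1 → 0 < α k)
    (hμ : ∀ k, 1 ≤ k → k ≤ j → 0 < μ k)
    (hμeq : μt = μts)
    (I1 : ℝ) (hI1 : 0 ≤ I1) :
    (∃ S R St It : ℝ, ∃ I : ℕ → ℝ, I 1 = I1 ∧
        IsEquilibNoI1 j f c cv γ Sb Sbv μs μr μts μt α μ S R St It I) ∧
    (∀ S R St It : ℝ, ∀ I : ℕ → ℝ, I 1 = I1 →
        IsEquilibNoI1 j f c cv γ Sb Sbv μs μr μts μt α μ S R St It I →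
        St = μts * Sbv / (μts + f * c * I1 / Sb * xiSum j γ α μ) ∧
        It = Sbv - μts * Sbv / (μts + f * c * I1 / Sb * xiSum j γ α μ) ∧
        S = μs * Sb /
          (μs + f * cv * (Sbv - μts * Sbv / (μts + f * c * I1 / Sb * xiSum j γ α μ)) / Sb) ∧
        R = γ / μr * (∏ l ∈ Icc 1 (j - 1), ccoef j γ α μ l) * I1 ∧
        ∀ k, 2 ≤ k → k ≤ j → I k = (∏ l ∈ Icc 1 (k - 1), ccoef j γ α μ l) * I1) :=
  stmt2_general j hj f c cv γ Sb Sbv μs μr μts μt α μ hf hc hcv hγ hSb hSbv hμs hμr hμts hα hμ hμeq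
    I1 hI1
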